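/- The ad-invariant bilinear form ⟨x,y⟩_λ = Σ_{i=1}^m (λ_i/2)(x_i y_i + x_{m+i} y_{m+i}) + x_0 y_1 + y_0 x_1 on the oscillator Lie algebra osc_λ (with λ_i > 0) is non-degenerate and has Lorentzian signature, i.e. signature (2m+1, 1). -/

import Mathlib

/-- The underlying vector space of the oscillator algebra:
components `(a, b, t₀, t₁)` corresponding to `Σ aᵢ eᵢ + Σ bᵢ e_{m+i} + t₀ ε₀ + t₁ ε₁`. -/
def OscV (m : ℕ) : Type := (Fin m → ℝ) × (Fin m → ℝ) × ℝ × ℝ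

instance (m : ℕ) : AddCommGroup (OscV m) :=
  inferInstanceAs (AddCommGroup ((Fin m → ℝ) × (Fin m → ℝ) × ℝ × ℝ))

noncomputable instance (m : ℕ) : Module ℝ (OscV m) :=
  inferInstanceAs (Module ℝ ((Fin m → ℝ) × (Fin m → ℝ) × ℝ × ℝ))

/-- The Lorentzian bilinear form `⟨x,y⟩_λ`. -/
noncomputable def oscForm {m : ℕ} (lam : Fin m → ℝ) (x y : OscV m) : ℝ :=
  (∑ i, lam i / 2 * (x.1 i * y.1 i + x.2.1 i * y.2.1 i))
    + x.2.2.1 * y.2.2.2 + y.2.2.1 * x.2.2.2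

/-!
With respect to `oscForm lam`, the span of the `eᵢ` is orthogonal to the span of `ε₀, ε₁`. On the
former the form is diagonal with positive entries `λᵢ / 2`, so rescaling `eᵢ` by `√(2 / λᵢ)` makes
it the identity; on the latter it is the hyperbolic plane `2 x₀ x₁`, in which `(ε₀ ± ε₁) / √2` have
squares `±1` and are orthogonal. These `2m + 2` vectors have Gram matrix `diag(1, …, 1, -1)`, so
they are linearly independent, hence a basis, and a form with an orthogonal basis of
non-isotropic vectors is nondegenerate.
-/

open Module

theorem Fintype.sum_mul_single_mul_single {ι R : Type*} [Fintype ι] [DecidableEq ι] [CommSemiring R]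
    (w : ι → R) (k l : ι) (a b : R) :
    ∑ i, w i * ((Pi.single k a : ι → R) i * (Pi.single l b : ι → R) i) =
      if k = l then w k * (a * b) else 0 := by
  split_ifs with h
  · subst h
    simp [Pi.single_apply]
  · simp [Pi.single_apply, Ne.symm h]

namespace LinearMap.BilinForm

variable {K V ι : Type*} [Field K] [AddCommGroup V] [Module K V] [DecidableEq ι]
  {B : LinearMap.BilinForm K V} {v : ι → V} {d : ι → K}

theorem linearIndependent_of_apply_eq_diagonal (hd : ∀ i, d i ≠ 0)
    (hB : ∀ i j, B (v i) (v j) = if i = j then d i else 0) : LinearIndependent K v :=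
  LinearMap.linearIndependent_of_isOrthoᵢ (B := B) (fun i j hij => (hB i j).trans (if_neg hij))
    (fun i => by simpa [hB] using hd i)

theorem nondegenerate_of_basis_apply_eq_diagonal (b : Basis ι K V) (hd : ∀ i, d i ≠ 0)
    (hB : ∀ i j, B (b i) (b j) = if i = j then d i else 0) : B.Nondegenerate :=
  (iIsOrtho.nondegenerate_iff_not_isOrtho_basis_self B b fun i j hij =>
    (hB i j).trans (if_neg hij)).2 fun i => by simpa [hB] using hd i

end LinearMap.BilinForm

namespace OscV

variable {m : ℕ}

@[simp] theorem fst_add (x y : OscV m) : (x + y).1 = x.1 + y.1 := rfl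
@[simp] theorem snd_add (x y : OscV m) : (x + y).2 = x.2 + y.2 := rfl
@[simp] theorem fst_smul (c : ℝ) (x : OscV m) : (c • x).1 = c • x.1 := rfl
@[simp] theorem snd_smul (c : ℝ) (x : OscV m) : (c • x).2 = c • x.2 := rfl

instance : FiniteDimensional ℝ (OscV m) :=
  inferInstanceAs (FiniteDimensional ℝ ((Fin m → ℝ) × (Fin m → ℝ) × ℝ × ℝ))

theorem finrank_eq : finrank ℝ (OscV m) = 2 * m + 2 := by
  change finrank ℝ ((Fin m → ℝ) × (Fin m → ℝ) × ℝ × ℝ) = _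
  simp only [finrank_prod, finrank_fintype_fun_eq_card, Fintype.card_fin, finrank_self]
  ring

end OscV

/-- Orders the basis as the rescaled `e₁, …, e₂ₘ`, then `(ε₀ + ε₁) / √2`, then `(ε₀ - ε₁) / √2`,
so that the vector of negative square comes last. -/
def oscIndexEquiv (m : ℕ) : Fin m ⊕ Fin m ⊕ Fin 2 ≃ Fin (2 * m + 2) :=
  (Equiv.sumCongr (Equiv.refl _) finSumFinEquiv).trans (finSumFinEquiv.trans (finCongr (by ring)))

section

variable {m : ℕ}

@[simp] theorem oscIndexEquiv_inl (k : Fin m) : (oscIndexEquiv m (.inl k) : ℕ) = k := by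
  simp [oscIndexEquiv]

@[simp] theorem oscIndexEquiv_inr_inl (k : Fin m) :
    (oscIndexEquiv m (.inr (.inl k)) : ℕ) = m + k := by
  simp [oscIndexEquiv]

@[simp] theorem oscIndexEquiv_inr_inr (j : Fin 2) :
    (oscIndexEquiv m (.inr (.inr j)) : ℕ) = 2 * m + j := by
  simp [oscIndexEquiv, two_mul, add_assoc]

def oscSign : Fin m ⊕ Fin m ⊕ Fin 2 → ℝ
  | .inr (.inr 1) => -1
  | _ => 1

theorem oscSign_eq (x : Fin m ⊕ Fin m ⊕ Fin 2) :
    oscSign x = if (oscIndexEquiv m x : ℕ) < 2 * m + 1 then 1 else -1 := by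
  rcases x with k | k | j
  · rw [oscIndexEquiv_inl, if_pos (by omega)]
    rfl
  · rw [oscIndexEquiv_inr_inl, if_pos (by omega)]
    rfl
  · fin_cases j <;> simp [oscSign]

end

section

variable {m : ℕ} (lam : Fin m → ℝ)

theorem oscForm_comm (x y : OscV m) : oscForm lam x y = oscForm lam y x := by
  simp only [oscForm, mul_comm (x.1 _), mul_comm (x.2.1 _)]
  ring

theorem oscForm_add_left (x x' y : OscV m) :
    oscForm lam (x + x') y = oscForm lam x y + oscForm lam x' y := by
  simp only [oscForm, OscV.fst_add, OscV.snd_add, Prod.fst_add, Prod.snd_add, Pi.add_apply,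
    add_mul, mul_add, Finset.sum_add_distrib]
  ring

theorem oscForm_smul_left (c : ℝ) (x y : OscV m) :
    oscForm lam (c • x) y = c * oscForm lam x y := by
  simp only [oscForm, OscV.fst_smul, OscV.snd_smul, Prod.smul_fst, Prod.smul_snd, Pi.smul_apply,
    smul_eq_mul, mul_add, Finset.mul_sum, mul_assoc, mul_left_comm c]

noncomputable def oscBilinForm : LinearMap.BilinForm ℝ (OscV m) :=
  LinearMap.mk₂ ℝ (oscForm lam) (oscForm_add_left lam) (oscForm_smul_left lam)
    (fun x y y' => by simp only [oscForm_comm lam x, oscForm_add_left])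
    (fun c x y => by simp only [oscForm_comm lam x, oscForm_smul_left, smul_eq_mul])

@[simp] theorem oscBilinForm_apply (x y : OscV m) : oscBilinForm lam x y = oscForm lam x y := rfl

noncomputable def oscOrthonormalVec : Fin m ⊕ Fin m ⊕ Fin 2 → OscV m
  | .inl k => (Pi.single k √(2 / lam k), 0, 0, 0)
  | .inr (.inl k) => (0, Pi.single k √(2 / lam k), 0, 0)
  | .inr (.inr j) => (0, 0, (√2)⁻¹, ![1, -1] j * (√2)⁻¹)

theorem oscForm_oscOrthonormalVec (hlam : ∀ i, 0 < lam i) (x y : Fin m ⊕ Fin m ⊕ Fin 2) :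
    oscForm lam (oscOrthonormalVec lam x) (oscOrthonormalVec lam y) =
      if x = y then oscSign x else 0 := by
  have hsq (k : Fin m) : lam k / 2 * (√(2 / lam k) * √(2 / lam k)) = 1 := by
    rw [Real.mul_self_sqrt (div_nonneg zero_le_two (hlam k).le)]
    field_simp [(hlam k).ne']
  have hhalf : (√2)⁻¹ * (√2)⁻¹ = 1 / 2 := by
    rw [← mul_inv, Real.mul_self_sqrt zero_le_two, one_div]
  rcases x with k | k | j <;> rcases y with l | l | i <;>
    simp only [oscForm, oscOrthonormalVec, oscSign, Pi.zero_apply, mul_zero, zero_mul, add_zero,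
      zero_add, Finset.sum_const_zero, Fintype.sum_mul_single_mul_single, Sum.inl.injEq,
      Sum.inr.injEq, reduceCtorEq, if_false]
  case inl.inl | inr.inl.inr.inl =>
    rcases eq_or_ne k l with rfl | hkl
    · simp only [hsq]
    · simp only [if_neg hkl]
  case inr.inr.inr.inr =>
    fin_cases j <;> fin_cases i <;> norm_num [oscSign, mul_left_comm _ (-1 : ℝ), hhalf]

end

/-- for `λᵢ > 0`, the ad-invariant form `⟨·,·⟩_λ` on `osc_λ` is
non-degenerate and has Lorentzian signature `(2m+1, 1)`: there is a basis in which
it is diagonal with `2m+1` entries equal to `+1` and one entry equal to `-1`. -/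
theorem oscForm_nondegenerate_lorentzian {m : ℕ} (lam : Fin m → ℝ)
    (hlam : ∀ i, 0 < lam i) :
    (∀ x : OscV m, (∀ y : OscV m, oscForm lam x y = 0) → x = 0) ∧
    ∃ b : Module.Basis (Fin (2 * m + 2)) ℝ (OscV m),
      ∀ i j, oscForm lam (b i) (b j) =
        if i = j then (if (i : ℕ) < 2 * m + 1 then 1 else -1) else 0 := by
  set v := oscOrthonormalVec lam ∘ (oscIndexEquiv m).symm
  have hgram (i j) : oscBilinForm lam (v i) (v j) =
      if i = j then (if (i : ℕ) < 2 * m + 1 then 1 else -1) else 0 := by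
    simp only [oscBilinForm_apply, v, Function.comp_apply, oscForm_oscOrthonormalVec lam hlam,
      (oscIndexEquiv m).symm.injective.eq_iff, oscSign_eq, Equiv.apply_symm_apply]
  have hd (i : Fin (2 * m + 2)) : (if (i : ℕ) < 2 * m + 1 then (1 : ℝ) else -1) ≠ 0 := by
    split_ifs <;> norm_num
  have hindep := LinearMap.BilinForm.linearIndependent_of_apply_eq_diagonal hd hgram
  let b := basisOfLinearIndependentOfCardEqFinrank' v hindep (by simp [OscV.finrank_eq])
  have hb : ⇑b = v := coe_basisOfLinearIndependentOfCardEqFinrank' v hindep _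
  rw [← hb] at hgram
  exact ⟨(LinearMap.BilinForm.nondegenerate_of_basis_apply_eq_diagonal b hd hgram).1, b, hgram⟩
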